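/- For every n ≥ 0 and all z, w ∈ ℂ with z ≠ w, the Poisson bracket {A_n(z), A_n^*(w)} = i·A_n(z)·A_n^*(w) − (i/(z−w))·(z·B_n^*(z)·B_n(w) − w·B_n^*(w)·B_n(z)). -/

import Mathlib

open Complex

/-- Derivative of `f` in the direction of the real part of the `k`-th variable α_k. -/
noncomputable def duDeriv (k : ℕ) (f : (ℕ → ℂ) → ℂ) (a : ℕ → ℂ) : ℂ :=
  deriv (fun t : ℝ => f (Function.update a k (a k + (t : ℂ)))) 0

/-- Derivative of `f` in the direction of the imaginary part of the `k`-th variable α_k. -/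
noncomputable def dvDeriv (k : ℕ) (f : (ℕ → ℂ) → ℂ) (a : ℕ → ℂ) : ℂ :=
  deriv (fun t : ℝ => f (Function.update a k (a k + (t : ℂ) * Complex.I))) 0

/-- Wirtinger derivative ∂f/∂α_k = (1/2)(∂/∂u_k − i·∂/∂v_k). -/
noncomputable def dAlpha (k : ℕ) (f : (ℕ → ℂ) → ℂ) (a : ℕ → ℂ) : ℂ :=
  (1 / 2) * (duDeriv k f a - Complex.I * dvDeriv k f a)

/-- Wirtinger derivative ∂f/∂conj(α_k) = (1/2)(∂/∂u_k + i·∂/∂v_k). -/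
noncomputable def dAlphaBar (k : ℕ) (f : (ℕ → ℂ) → ℂ) (a : ℕ → ℂ) : ℂ :=
  (1 / 2) * (duDeriv k f a + Complex.I * dvDeriv k f a)

/-- The Poisson bracket
{f,g} = i·Σ_k (1 − |α_k|²)·[(∂f/∂conj(α_k))·(∂g/∂α_k) − (∂f/∂α_k)·(∂g/∂conj(α_k))]. -/
noncomputable def pb (f g : (ℕ → ℂ) → ℂ) (a : ℕ → ℂ) : ℂ :=
  Complex.I * ∑' k : ℕ, (1 - (Complex.normSq (a k) : ℂ)) *
    (dAlphaBar k f a * dAlpha k g a - dAlpha k f a * dAlphaBar k g a)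

/-- The quadruple ((A_n(z), B_n(z)), (A_n^*(z), B_n^*(z))) of Wall polynomials:
A_0(z) = α_0, B_0(z) = 1, A_0^*(z) = conj(α_0), B_0^*(z) = 1,
A_{n+1}(z) = A_n(z) + α_{n+1}·z·B_n^*(z), B_{n+1}(z) = B_n(z) + α_{n+1}·z·A_n^*(z),
A_{n+1}^*(z) = z·A_n^*(z) + conj(α_{n+1})·B_n(z),
B_{n+1}^*(z) = z·B_n^*(z) + conj(α_{n+1})·A_n(z). -/
noncomputable def WallP : ℕ → ℂ → (ℕ → ℂ) → (ℂ × ℂ) × ℂ × ℂ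
  | 0, _, a => ((a 0, 1), (starRingEnd ℂ) (a 0), 1)
  | n + 1, z, a =>
      (((WallP n z a).1.1 + a (n + 1) * z * (WallP n z a).2.2,
        (WallP n z a).1.2 + a (n + 1) * z * (WallP n z a).2.1),
       z * (WallP n z a).2.1 + (starRingEnd ℂ) (a (n + 1)) * (WallP n z a).1.2,
       z * (WallP n z a).2.2 + (starRingEnd ℂ) (a (n + 1)) * (WallP n z a).1.1)

/-- The Wall polynomial A_n(z). -/
noncomputable def WallA (n : ℕ) (z : ℂ) (a : ℕ → ℂ) : ℂ := (WallP n z a).1.1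

/-- The Wall polynomial B_n(z). -/
noncomputable def WallB (n : ℕ) (z : ℂ) (a : ℕ → ℂ) : ℂ := (WallP n z a).1.2

/-- The reversed Wall polynomial A_n^*(z). -/
noncomputable def WallAStar (n : ℕ) (z : ℂ) (a : ℕ → ℂ) : ℂ := (WallP n z a).2.1

/-- The reversed Wall polynomial B_n^*(z). -/
noncomputable def WallBStar (n : ℕ) (z : ℂ) (a : ℕ → ℂ) : ℂ := (WallP n z a).2.2

/-! Auxiliary machinery -/

/-- Derivative tables: `DW n z k a = ((∂A,∂B,∂A*,∂B*),(∂̄A,∂̄B,∂̄A*,∂̄B*))` w.r.t. α_k. -/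
noncomputable def DW : ℕ → ℂ → ℕ → (ℕ → ℂ) → (ℂ × ℂ × ℂ × ℂ) × (ℂ × ℂ × ℂ × ℂ)
  | 0, _, k, _ => if k = 0 then ((1, 0, 0, 0), (0, 0, 1, 0)) else ((0, 0, 0, 0), (0, 0, 0, 0))
  | n + 1, z, k, a =>
    if k = n + 1 then
      ((z * (WallP n z a).2.2, z * (WallP n z a).2.1, 0, 0),
       (0, 0, (WallP n z a).1.2, (WallP n z a).1.1))
    else
      (((DW n z k a).1.1 + a (n + 1) * z * (DW n z k a).1.2.2.2,
        (DW n z k a).1.2.1 + a (n + 1) * z * (DW n z k a).1.2.2.1,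
        z * (DW n z k a).1.2.2.1 + (starRingEnd ℂ) (a (n + 1)) * (DW n z k a).1.2.1,
        z * (DW n z k a).1.2.2.2 + (starRingEnd ℂ) (a (n + 1)) * (DW n z k a).1.1),
       ((DW n z k a).2.1 + a (n + 1) * z * (DW n z k a).2.2.2.2,
        (DW n z k a).2.2.1 + a (n + 1) * z * (DW n z k a).2.2.2.1,
        z * (DW n z k a).2.2.2.1 + (starRingEnd ℂ) (a (n + 1)) * (DW n z k a).2.2.1,
        z * (DW n z k a).2.2.2.2 + (starRingEnd ℂ) (a (n + 1)) * (DW n z k a).2.1))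

lemma DW_zero_eq (z : ℂ) (a : ℕ → ℂ) : DW 0 z 0 a = ((1, 0, 0, 0), (0, 0, 1, 0)) := by
  simp [DW]

lemma DW_zero_ne (z : ℂ) (k : ℕ) (hk : ¬ k = 0) (a : ℕ → ℂ) :
    DW 0 z k a = ((0, 0, 0, 0), (0, 0, 0, 0)) := by
  simp [DW, hk]

lemma DW_succ_eq (n : ℕ) (z : ℂ) (a : ℕ → ℂ) :
    DW (n + 1) z (n + 1) a =
      ((z * (WallP n z a).2.2, z * (WallP n z a).2.1, 0, 0),
       (0, 0, (WallP n z a).1.2, (WallP n z a).1.1)) := by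
  simp [DW]

lemma DW_succ_ne (n : ℕ) (z : ℂ) (k : ℕ) (hk : ¬ k = n + 1) (a : ℕ → ℂ) :
    DW (n + 1) z k a =
      (((DW n z k a).1.1 + a (n + 1) * z * (DW n z k a).1.2.2.2,
        (DW n z k a).1.2.1 + a (n + 1) * z * (DW n z k a).1.2.2.1,
        z * (DW n z k a).1.2.2.1 + (starRingEnd ℂ) (a (n + 1)) * (DW n z k a).1.2.1,
        z * (DW n z k a).1.2.2.2 + (starRingEnd ℂ) (a (n + 1)) * (DW n z k a).1.1),
       ((DW n z k a).2.1 + a (n + 1) * z * (DW n z k a).2.2.2.2,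
        (DW n z k a).2.2.1 + a (n + 1) * z * (DW n z k a).2.2.2.1,
        z * (DW n z k a).2.2.2.1 + (starRingEnd ℂ) (a (n + 1)) * (DW n z k a).2.2.1,
        z * (DW n z k a).2.2.2.2 + (starRingEnd ℂ) (a (n + 1)) * (DW n z k a).2.1)) := by
  rw [DW, if_neg hk]

lemma WallP_succ_eq (n : ℕ) (z : ℂ) (a : ℕ → ℂ) :
    WallP (n + 1) z a =
      (((WallP n z a).1.1 + a (n + 1) * z * (WallP n z a).2.2,
        (WallP n z a).1.2 + a (n + 1) * z * (WallP n z a).2.1),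
       z * (WallP n z a).2.1 + (starRingEnd ℂ) (a (n + 1)) * (WallP n z a).1.2,
       z * (WallP n z a).2.2 + (starRingEnd ℂ) (a (n + 1)) * (WallP n z a).1.1) := by
  rw [WallP]

lemma WallP_zero_eq (z : ℂ) (a : ℕ → ℂ) :
    WallP 0 z a = ((a 0, 1), (starRingEnd ℂ) (a 0), 1) := by
  rw [WallP]

lemma WallP_update_of_gt (z : ℂ) : ∀ (n k : ℕ), n < k → ∀ (a : ℕ → ℂ) (x : ℂ),
    WallP n z (Function.update a k x) = WallP n z a := by
  intro n
  induction n with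
  | zero =>
    intro k hk a x
    rw [WallP_zero_eq, WallP_zero_eq, Function.update_of_ne (by omega : (0:ℕ) ≠ k)]
  | succ n ih =>
    intro k hk a x
    rw [WallP_succ_eq, WallP_succ_eq, ih k (by omega) a x,
      Function.update_of_ne (by omega : n + 1 ≠ k)]

lemma DW_eq_zero_of_gt (z : ℂ) : ∀ (n k : ℕ), n < k → ∀ (a : ℕ → ℂ),
    DW n z k a = ((0, 0, 0, 0), (0, 0, 0, 0)) := by
  intro n
  induction n with
  | zero =>
    intro k hk a
    exact DW_zero_ne z k (by omega) a
  | succ n ih =>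
    intro k hk a
    rw [DW_succ_ne n z k (by omega) a, ih k (by omega) a]
    norm_num

lemma wall_update (z : ℂ) : ∀ (n k : ℕ) (a : ℕ → ℂ) (x : ℂ),
    (WallP n z (Function.update a k x)).1.1 = (WallP n z a).1.1
        + (DW n z k a).1.1 * (x - a k)
        + (DW n z k a).2.1 * ((starRingEnd ℂ) x - (starRingEnd ℂ) (a k)) ∧
    (WallP n z (Function.update a k x)).1.2 = (WallP n z a).1.2
        + (DW n z k a).1.2.1 * (x - a k)
        + (DW n z k a).2.2.1 * ((starRingEnd ℂ) x - (starRingEnd ℂ) (a k)) ∧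
    (WallP n z (Function.update a k x)).2.1 = (WallP n z a).2.1
        + (DW n z k a).1.2.2.1 * (x - a k)
        + (DW n z k a).2.2.2.1 * ((starRingEnd ℂ) x - (starRingEnd ℂ) (a k)) ∧
    (WallP n z (Function.update a k x)).2.2 = (WallP n z a).2.2
        + (DW n z k a).1.2.2.2 * (x - a k)
        + (DW n z k a).2.2.2.2 * ((starRingEnd ℂ) x - (starRingEnd ℂ) (a k)) := by
  intro n
  induction n with
  | zero =>
    intro k a x
    by_cases hk : k = 0
    · subst hk
      rw [WallP_zero_eq, WallP_zero_eq, DW_zero_eq, Function.update_self]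
      dsimp only
      refine ⟨by ring, by ring, by ring, by ring⟩
    · rw [WallP_zero_eq, WallP_zero_eq, DW_zero_ne z k hk,
        Function.update_of_ne (Ne.symm hk)]
      dsimp only
      refine ⟨by ring, by ring, by ring, by ring⟩
  | succ n ih =>
    intro k a x
    by_cases hk : k = n + 1
    · subst hk
      have h0 := WallP_update_of_gt z n (n + 1) (by omega) a x
      rw [WallP_succ_eq, WallP_succ_eq, DW_succ_eq, h0, Function.update_self]
      dsimp only
      refine ⟨by ring, by ring, by ring, by ring⟩
    · obtain ⟨h1, h2, h3, h4⟩ := ih k a x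
      rw [WallP_succ_eq, WallP_succ_eq, DW_succ_ne n z k hk, h1, h2, h3, h4,
        Function.update_of_ne (fun h => hk h.symm)]
      dsimp only
      refine ⟨by ring, by ring, by ring, by ring⟩

lemma duDeriv_affine (k : ℕ) (f : (ℕ → ℂ) → ℂ) (a : ℕ → ℂ) (p q r : ℂ)
    (h : ∀ x : ℂ, f (Function.update a k x) = p + q * (x - a k)
        + r * ((starRingEnd ℂ) x - (starRingEnd ℂ) (a k))) :
    duDeriv k f a = q + r := by
  unfold duDeriv
  have hfun : (fun t : ℝ => f (Function.update a k (a k + (t : ℂ))))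
      = fun t : ℝ => p + (q + r) * (t : ℂ) := by
    funext t
    rw [h]
    simp only [map_add, Complex.conj_ofReal]
    ring
  rw [hfun]
  have hd : HasDerivAt (fun t : ℝ => p + (q + r) * (t : ℂ)) (q + r) 0 := by
    simpa using (Complex.ofRealCLM.hasDerivAt (x := (0:ℝ))).const_mul (q + r) |>.const_add p
  exact hd.deriv

lemma dvDeriv_affine (k : ℕ) (f : (ℕ → ℂ) → ℂ) (a : ℕ → ℂ) (p q r : ℂ)
    (h : ∀ x : ℂ, f (Function.update a k x) = p + q * (x - a k)
        + r * ((starRingEnd ℂ) x - (starRingEnd ℂ) (a k))) :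
    dvDeriv k f a = (q - r) * Complex.I := by
  unfold dvDeriv
  have hfun : (fun t : ℝ => f (Function.update a k (a k + (t : ℂ) * Complex.I)))
      = fun t : ℝ => p + ((q - r) * Complex.I) * (t : ℂ) := by
    funext t
    rw [h]
    simp only [map_add, map_mul, Complex.conj_ofReal, Complex.conj_I]
    ring
  rw [hfun]
  have hd : HasDerivAt (fun t : ℝ => p + ((q - r) * Complex.I) * (t : ℂ))
      ((q - r) * Complex.I) 0 := by
    simpa using (Complex.ofRealCLM.hasDerivAt (x := (0:ℝ))).const_mul
      ((q - r) * Complex.I) |>.const_add p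
  exact hd.deriv

lemma dAlpha_affine (k : ℕ) (f : (ℕ → ℂ) → ℂ) (a : ℕ → ℂ) (p q r : ℂ)
    (h : ∀ x : ℂ, f (Function.update a k x) = p + q * (x - a k)
        + r * ((starRingEnd ℂ) x - (starRingEnd ℂ) (a k))) :
    dAlpha k f a = q := by
  unfold dAlpha
  rw [duDeriv_affine k f a p q r h, dvDeriv_affine k f a p q r h]
  linear_combination (-(q - r) / 2) * Complex.I_mul_I

lemma dAlphaBar_affine (k : ℕ) (f : (ℕ → ℂ) → ℂ) (a : ℕ → ℂ) (p q r : ℂ)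
    (h : ∀ x : ℂ, f (Function.update a k x) = p + q * (x - a k)
        + r * ((starRingEnd ℂ) x - (starRingEnd ℂ) (a k))) :
    dAlphaBar k f a = r := by
  unfold dAlphaBar
  rw [duDeriv_affine k f a p q r h, dvDeriv_affine k f a p q r h]
  linear_combination ((q - r) / 2) * Complex.I_mul_I

lemma dAlpha_WallA (n : ℕ) (z : ℂ) (k : ℕ) (a : ℕ → ℂ) :
    dAlpha k (WallA n z) a = (DW n z k a).1.1 :=
  dAlpha_affine k _ a _ _ _ (fun x => (wall_update z n k a x).1)

lemma dAlphaBar_WallA (n : ℕ) (z : ℂ) (k : ℕ) (a : ℕ → ℂ) :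
    dAlphaBar k (WallA n z) a = (DW n z k a).2.1 :=
  dAlphaBar_affine k _ a _ _ _ (fun x => (wall_update z n k a x).1)

lemma dAlpha_WallB (n : ℕ) (z : ℂ) (k : ℕ) (a : ℕ → ℂ) :
    dAlpha k (WallB n z) a = (DW n z k a).1.2.1 :=
  dAlpha_affine k _ a _ _ _ (fun x => (wall_update z n k a x).2.1)

lemma dAlphaBar_WallB (n : ℕ) (z : ℂ) (k : ℕ) (a : ℕ → ℂ) :
    dAlphaBar k (WallB n z) a = (DW n z k a).2.2.1 :=
  dAlphaBar_affine k _ a _ _ _ (fun x => (wall_update z n k a x).2.1)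

lemma dAlpha_WallAStar (n : ℕ) (z : ℂ) (k : ℕ) (a : ℕ → ℂ) :
    dAlpha k (WallAStar n z) a = (DW n z k a).1.2.2.1 :=
  dAlpha_affine k _ a _ _ _ (fun x => (wall_update z n k a x).2.2.1)

lemma dAlphaBar_WallAStar (n : ℕ) (z : ℂ) (k : ℕ) (a : ℕ → ℂ) :
    dAlphaBar k (WallAStar n z) a = (DW n z k a).2.2.2.1 :=
  dAlphaBar_affine k _ a _ _ _ (fun x => (wall_update z n k a x).2.2.1)

lemma dAlpha_WallBStar (n : ℕ) (z : ℂ) (k : ℕ) (a : ℕ → ℂ) :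
    dAlpha k (WallBStar n z) a = (DW n z k a).1.2.2.2 :=
  dAlpha_affine k _ a _ _ _ (fun x => (wall_update z n k a x).2.2.2)

lemma dAlphaBar_WallBStar (n : ℕ) (z : ℂ) (k : ℕ) (a : ℕ → ℂ) :
    dAlphaBar k (WallBStar n z) a = (DW n z k a).2.2.2.2 :=
  dAlphaBar_affine k _ a _ _ _ (fun x => (wall_update z n k a x).2.2.2)

/-- Level-`n` bracket sum for the pair `(A(z), A*(w))` (without the `i` factor). -/
noncomputable def SP (n : ℕ) (z w : ℂ) (a : ℕ → ℂ) : ℂ :=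
  ∑ k ∈ Finset.range (n + 1), (1 - a k * (starRingEnd ℂ) (a k)) *
    ((DW n z k a).2.1 * (DW n w k a).1.2.2.1 - (DW n z k a).1.1 * (DW n w k a).2.2.2.1)

/-- For the pair `(A(z), B(w))`. -/
noncomputable def SQ (n : ℕ) (z w : ℂ) (a : ℕ → ℂ) : ℂ :=
  ∑ k ∈ Finset.range (n + 1), (1 - a k * (starRingEnd ℂ) (a k)) *
    ((DW n z k a).2.1 * (DW n w k a).1.2.1 - (DW n z k a).1.1 * (DW n w k a).2.2.1)

/-- For the pair `(B*(z), A*(w))`. -/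
noncomputable def SR (n : ℕ) (z w : ℂ) (a : ℕ → ℂ) : ℂ :=
  ∑ k ∈ Finset.range (n + 1), (1 - a k * (starRingEnd ℂ) (a k)) *
    ((DW n z k a).2.2.2.2 * (DW n w k a).1.2.2.1 - (DW n z k a).1.2.2.2 * (DW n w k a).2.2.2.1)

/-- For the pair `(B*(z), B(w))`. -/
noncomputable def SS (n : ℕ) (z w : ℂ) (a : ℕ → ℂ) : ℂ :=
  ∑ k ∈ Finset.range (n + 1), (1 - a k * (starRingEnd ℂ) (a k)) *
    ((DW n z k a).2.2.2.2 * (DW n w k a).1.2.1 - (DW n z k a).1.2.2.2 * (DW n w k a).2.2.1)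

lemma pb_A_AStar_eq (n : ℕ) (z w : ℂ) (a : ℕ → ℂ) :
    pb (WallA n z) (WallAStar n w) a = Complex.I * SP n z w a := by
  unfold pb SP
  congr 1
  rw [tsum_eq_sum (s := Finset.range (n + 1)) ?h]
  · refine Finset.sum_congr rfl fun k _ => ?_
    rw [dAlpha_WallA, dAlphaBar_WallA, dAlpha_WallAStar, dAlphaBar_WallAStar,
      ← Complex.mul_conj]
  case h =>
    intro k hk
    have hnk : n < k := by simp [Finset.mem_range] at hk; omega
    rw [dAlpha_WallA, dAlphaBar_WallA, dAlpha_WallAStar, dAlphaBar_WallAStar,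
      DW_eq_zero_of_gt z n k hnk a, DW_eq_zero_of_gt w n k hnk a]
    norm_num

lemma key_brackets (z w : ℂ) (a : ℕ → ℂ) : ∀ n : ℕ,
    (z - w) * SP n z w a = (z - w) * (WallP n z a).1.1 * (WallP n w a).2.1
        - (z * (WallP n z a).2.2 * (WallP n w a).1.2
            - w * (WallP n w a).2.2 * (WallP n z a).1.2) ∧
    (z - w) * SQ n z w a
      = w * ((WallP n z a).1.2 * (WallP n w a).1.1 - (WallP n z a).1.1 * (WallP n w a).1.2) ∧
    (z - w) * SR n z w a
      = w * ((WallP n z a).2.1 * (WallP n w a).2.2 - (WallP n z a).2.2 * (WallP n w a).2.1) ∧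
    (z - w) * SS n z w a
      = w * ((WallP n z a).2.1 * (WallP n w a).1.1 - (WallP n z a).1.1 * (WallP n w a).2.1) := by
  intro n
  induction n with
  | zero =>
    simp only [SP, SQ, SR, SS, zero_add, Finset.sum_range_one, DW_zero_eq,
      WallP_zero_eq]
    refine ⟨by ring, by ring, by ring, by ring⟩
  | succ n ih =>
    obtain ⟨ihP, ihQ, ihR, ihS⟩ := ih
    have hsumP : (∑ k ∈ Finset.range (n + 1), (1 - a k * (starRingEnd ℂ) (a k)) *
          ((DW (n+1) z k a).2.1 * (DW (n+1) w k a).1.2.2.1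
            - (DW (n+1) z k a).1.1 * (DW (n+1) w k a).2.2.2.1))
        = w * SP n z w a + (starRingEnd ℂ) (a (n+1)) * SQ n z w a
          + a (n+1) * z * w * SR n z w a
          + a (n+1) * (starRingEnd ℂ) (a (n+1)) * z * SS n z w a := by
      simp only [SP, SQ, SR, SS, Finset.mul_sum]
      rw [← Finset.sum_add_distrib, ← Finset.sum_add_distrib, ← Finset.sum_add_distrib]
      refine Finset.sum_congr rfl fun k hk => ?_
      have hk' : ¬ k = n + 1 := by simp only [Finset.mem_range] at hk; omega
      rw [DW_succ_ne n z k hk' a, DW_succ_ne n w k hk' a]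
      dsimp only
      ring
    have hsumQ : (∑ k ∈ Finset.range (n + 1), (1 - a k * (starRingEnd ℂ) (a k)) *
          ((DW (n+1) z k a).2.1 * (DW (n+1) w k a).1.2.1
            - (DW (n+1) z k a).1.1 * (DW (n+1) w k a).2.2.1))
        = SQ n z w a + a (n+1) * w * SP n z w a + a (n+1) * z * SS n z w a
          + a (n+1) * a (n+1) * z * w * SR n z w a := by
      simp only [SP, SQ, SR, SS, Finset.mul_sum]
      rw [← Finset.sum_add_distrib, ← Finset.sum_add_distrib, ← Finset.sum_add_distrib]
      refine Finset.sum_congr rfl fun k hk => ?_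
      have hk' : ¬ k = n + 1 := by simp only [Finset.mem_range] at hk; omega
      rw [DW_succ_ne n z k hk' a, DW_succ_ne n w k hk' a]
      dsimp only
      ring
    have hsumR : (∑ k ∈ Finset.range (n + 1), (1 - a k * (starRingEnd ℂ) (a k)) *
          ((DW (n+1) z k a).2.2.2.2 * (DW (n+1) w k a).1.2.2.1
            - (DW (n+1) z k a).1.2.2.2 * (DW (n+1) w k a).2.2.2.1))
        = z * w * SR n z w a + z * (starRingEnd ℂ) (a (n+1)) * SS n z w a
          + (starRingEnd ℂ) (a (n+1)) * w * SP n z w a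
          + (starRingEnd ℂ) (a (n+1)) * (starRingEnd ℂ) (a (n+1)) * SQ n z w a := by
      simp only [SP, SQ, SR, SS, Finset.mul_sum]
      rw [← Finset.sum_add_distrib, ← Finset.sum_add_distrib, ← Finset.sum_add_distrib]
      refine Finset.sum_congr rfl fun k hk => ?_
      have hk' : ¬ k = n + 1 := by simp only [Finset.mem_range] at hk; omega
      rw [DW_succ_ne n z k hk' a, DW_succ_ne n w k hk' a]
      dsimp only
      ring
    have hsumS : (∑ k ∈ Finset.range (n + 1), (1 - a k * (starRingEnd ℂ) (a k)) *
          ((DW (n+1) z k a).2.2.2.2 * (DW (n+1) w k a).1.2.1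
            - (DW (n+1) z k a).1.2.2.2 * (DW (n+1) w k a).2.2.1))
        = z * SS n z w a + a (n+1) * z * w * SR n z w a
          + (starRingEnd ℂ) (a (n+1)) * SQ n z w a
          + (starRingEnd ℂ) (a (n+1)) * a (n+1) * w * SP n z w a := by
      simp only [SP, SQ, SR, SS, Finset.mul_sum]
      rw [← Finset.sum_add_distrib, ← Finset.sum_add_distrib, ← Finset.sum_add_distrib]
      refine Finset.sum_congr rfl fun k hk => ?_
      have hk' : ¬ k = n + 1 := by simp only [Finset.mem_range] at hk; omega
      rw [DW_succ_ne n z k hk' a, DW_succ_ne n w k hk' a]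
      dsimp only
      ring
    refine ⟨?_, ?_, ?_, ?_⟩
    · rw [SP, Finset.sum_range_succ, hsumP, DW_succ_eq n z a, DW_succ_eq n w a,
        WallP_succ_eq n z a, WallP_succ_eq n w a]
      dsimp only
      linear_combination w * ihP + (starRingEnd ℂ) (a (n+1)) * ihQ
        + a (n+1) * z * w * ihR + a (n+1) * (starRingEnd ℂ) (a (n+1)) * z * ihS
    · rw [SQ, Finset.sum_range_succ, hsumQ, DW_succ_eq n z a, DW_succ_eq n w a,
        WallP_succ_eq n z a, WallP_succ_eq n w a]
      dsimp only
      linear_combination ihQ + a (n+1) * w * ihP + a (n+1) * z * ihS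
        + a (n+1) * a (n+1) * z * w * ihR
    · rw [SR, Finset.sum_range_succ, hsumR, DW_succ_eq n z a, DW_succ_eq n w a,
        WallP_succ_eq n z a, WallP_succ_eq n w a]
      dsimp only
      linear_combination z * w * ihR + z * (starRingEnd ℂ) (a (n+1)) * ihS
        + (starRingEnd ℂ) (a (n+1)) * w * ihP
        + (starRingEnd ℂ) (a (n+1)) * (starRingEnd ℂ) (a (n+1)) * ihQ
    · rw [SS, Finset.sum_range_succ, hsumS, DW_succ_eq n z a, DW_succ_eq n w a,
        WallP_succ_eq n z a, WallP_succ_eq n w a]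
      dsimp only
      linear_combination z * ihS + a (n+1) * z * w * ihR
        + (starRingEnd ℂ) (a (n+1)) * ihQ
        + (starRingEnd ℂ) (a (n+1)) * a (n+1) * w * ihP

theorem poisson_A_AStar (n : ℕ) (z w : ℂ) (hzw : z ≠ w) (a : ℕ → ℂ) (ha : ∀ k, ‖a k‖ < 1) :
    pb (WallA n z) (WallAStar n w) a =
      Complex.I * WallA n z a * WallAStar n w a
      - Complex.I / (z - w) * (z * WallBStar n z a * WallB n w a
          - w * WallBStar n w a * WallB n z a) := by
  rw [pb_A_AStar_eq n z w a]
  have hne : z - w ≠ 0 := sub_ne_zero.mpr hzw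
  have h := (key_brackets z w a n).1
  unfold WallA WallAStar WallB WallBStar
  field_simp
  linear_combination h
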